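/- arXiv:2305.19565 — 2 statements merged into one kernel-verified Lean document; each statement's English description precedes it below -/
import Mathlib

section
/- Assume ρ(β^j) ≠ 0 for every j ∈ Z/(q^m−1)Z, i.e. ρ has no root in E^×. Then every nonzero codeword c ∈ C(ρ,t) has Hamming weight w(c) (the number of orbits l with c_l ≠ 0) satisfying m·w(c) ≥ t+1; in particular the minimum distance of C(ρ,t) is at least (t+1)/m. -/
open Polynomial

noncomputable section

/-- The orbit of `j : ZMod N` under multiplication by `q`. -/
def qOrbit (N q : ℕ) (j : ZMod N) : Set (ZMod N) :=
  Set.range fun k : ℕ => (q : ZMod N) ^ k * j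

/-- The set `L` of orbits of `ZMod N` under multiplication by `q`. -/
def orbitSet (N q : ℕ) : Set (Set (ZMod N)) :=
  {l | ∃ j : ZMod N, l = qOrbit N q j}

/-- `β ^ j` for a residue class `j`. -/
def bpow {E : Type*} [Monoid E] {N : ℕ} (β : E) (j : ZMod N) : E :=
  β ^ j.val

/-- The check-matrix entry `h_{i l} = ∑_{j ∈ l} ρ(β^j) β^{i j}`, as an element of `E`. -/
def hEntry {F E : Type*} [CommSemiring F] [CommSemiring E] [Algebra F E] {N : ℕ}
    (β : E) (ρ : Polynomial F) (i : ℕ) (l : Set (ZMod N)) : E :=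
  ∑ᶠ j ∈ l, Polynomial.aeval (bpow β j) ρ * bpow β j ^ i

/-- The code `C(ρ, t)` inside `F^L`. -/
def codeSet (F E : Type*) [Field F] [Field E] [Algebra F E] (N q : ℕ)
    (β : E) (ρ : Polynomial F) (t : ℕ) : Set (↥(orbitSet N q) → F) :=
  {c | ∀ i < t, ∑ᶠ l : orbitSet N q,
    algebraMap F E (c l) * hEntry β ρ i (l : Set (ZMod N)) = 0}

open scoped Classical in
/-- `deg c = ∑_{l : c_l ≠ 0} |l|`. -/
def wdeg {F : Type*} [Zero F] {N q : ℕ} (c : ↥(orbitSet N q) → F) : ℕ :=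
  ∑ᶠ l : orbitSet N q, if c l ≠ 0 then (l : Set (ZMod N)).ncard else 0

lemma mem_qOrbit_self (N q : ℕ) (j : ZMod N) : j ∈ qOrbit N q j := ⟨0, by simp⟩

lemma qOrbit_eq_of_mem {N q m : ℕ} (h1 : ((q : ZMod N)) ^ m = 1) (hm : 0 < m)
    {j j' : ZMod N} (hj : j ∈ qOrbit N q j') : qOrbit N q j = qOrbit N q j' := by
  obtain ⟨k, rfl⟩ := hj
  ext x
  constructor
  · rintro ⟨a, rfl⟩
    exact ⟨a + k, by simp only []; rw [pow_add]; ring⟩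
  · rintro ⟨a, rfl⟩
    refine ⟨a + k * (m - 1), ?_⟩
    simp only []
    have hk : a + k * (m - 1) + k = a + k * m := by
      have : m - 1 + 1 = m := Nat.succ_pred_eq_of_pos hm
      calc a + k * (m-1) + k = a + k * (m - 1 + 1) := by ring
        _ = a + k * m := by rw [this]
    calc (q : ZMod N) ^ (a + k * (m-1)) * ((q:ZMod N)^k * j')
        = (q : ZMod N) ^ (a + k*(m-1) + k) * j' := by rw [pow_add]; ring
      _ = (q : ZMod N) ^ (a + k * m) * j' := by rw [hk]
      _ = (q : ZMod N) ^ a * ((q:ZMod N)^m)^k * j' := by rw [pow_add, pow_mul']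
      _ = (q : ZMod N) ^ a * j' := by rw [h1, one_pow, mul_one]

lemma qOrbit_ncard_le {N q m : ℕ} (h1 : ((q : ZMod N)) ^ m = 1) (hm : 0 < m) (j : ZMod N) :
    (qOrbit N q j).ncard ≤ m := by
  have heq : qOrbit N q j = ↑((Finset.range m).image fun k => (q : ZMod N) ^ k * j) := by
    ext x
    simp only [Finset.coe_image, Finset.coe_range, Set.mem_image, Set.mem_Iio]
    constructor
    · rintro ⟨k, rfl⟩
      refine ⟨k % m, Nat.mod_lt _ hm, ?_⟩
      have : (q : ZMod N) ^ k = (q : ZMod N) ^ (k % m) := by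
        conv_lhs => rw [← Nat.mod_add_div k m, pow_add, pow_mul, h1, one_pow, mul_one]
      exact this ▸ rfl
    · rintro ⟨k, _, rfl⟩; exact ⟨k, rfl⟩
  rw [heq, Set.ncard_coe_finset]
  exact le_trans (Finset.card_image_le) (by simp)

/-- Distance bound: if `ρ` has no root in `E^×`, then every nonzero codeword
`c ∈ C(ρ,t)` has Hamming weight `w(c)` with `m · w(c) ≥ t + 1`; in particular
`w(c) ≥ (t+1)/m`, so the minimum distance of `C(ρ,t)` is at least `(t+1)/m`. -/
theorem codeC_dist_bound (q m : ℕ) (hm : 0 < m) (hqm : Nat.Coprime q m)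
    (F E : Type*) [Field F] [Field E] [Fintype F] [Fintype E] [Algebra F E]
    (hF : Fintype.card F = q) (hE : Fintype.card E = q ^ m)
    (β : E) (hβ : orderOf β = q ^ m - 1) (ρ : Polynomial F) (t : ℕ) (ht : 0 < t)
    (hρ : ∀ j : ZMod (q ^ m - 1), Polynomial.aeval (bpow β j) ρ ≠ 0) :
    ∀ c ∈ codeSet F E (q ^ m - 1) q β ρ t, c ≠ 0 →
      t + 1 ≤ m * {l : ↥(orbitSet (q ^ m - 1) q) | c l ≠ 0}.ncard ∧
      ((t : ℝ) + 1) / m ≤ ({l : ↥(orbitSet (q ^ m - 1) q) | c l ≠ 0}.ncard : ℝ) := by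
  classical
  set N := q ^ m - 1 with hNdef
  intro c hc hc0
  have hq2 : 2 ≤ q := by
    have := Fintype.one_lt_card (α := F)
    omega
  have hqm2 : 2 ≤ q ^ m := by
    calc 2 = 2 ^ 1 := rfl
    _ ≤ q ^ 1 := Nat.pow_le_pow_left hq2 1
    _ ≤ q ^ m := Nat.pow_le_pow_right (by omega) hm
  have hN1 : 1 ≤ N := by omega
  haveI : NeZero N := ⟨by omega⟩
  have h1 : ((q : ZMod N)) ^ m = 1 := by
    have hqN : q ^ m = N + 1 := by omega
    calc ((q : ZMod N)) ^ m = ((q ^ m : ℕ) : ZMod N) := by push_cast; ring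
      _ = ((N + 1 : ℕ) : ZMod N) := by rw [hqN]
      _ = 1 := by push_cast; simp
  -- injectivity of bpow
  have hinj : Function.Injective (fun j : ZMod N => bpow β j) := by
    intro j1 j2 h
    have h1m : j1.val ∈ Set.Iio (orderOf β) := by
      rw [hβ]; exact j1.val_lt
    have h2m : j2.val ∈ Set.Iio (orderOf β) := by
      rw [hβ]; exact j2.val_lt
    exact ZMod.val_injective N (pow_injOn_Iio_orderOf h1m h2m h)
  haveI : Fintype ↥(orbitSet N q) := Fintype.ofFinite _
  set π : ZMod N → ↥(orbitSet N q) := fun j => ⟨qOrbit N q j, j, rfl⟩ with hπdef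
  have hπmem : ∀ (l : ↥(orbitSet N q)) (j : ZMod N), π j = l ↔ j ∈ (l : Set (ZMod N)) := by
    rintro ⟨l, jl, rfl⟩ j
    constructor
    · intro h
      have hqq : qOrbit N q j = qOrbit N q jl := congrArg Subtype.val h
      show j ∈ qOrbit N q jl
      rw [← hqq]
      exact mem_qOrbit_self N q j
    · intro h
      exact Subtype.ext (qOrbit_eq_of_mem h1 hm h)
  set a : ZMod N → E := fun j => algebraMap F E (c (π j)) * Polynomial.aeval (bpow β j) ρ
    with hadef
  have hAinj : Function.Injective (algebraMap F E) := (algebraMap F E).injective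
  have ha0 : ∀ j, a j = 0 ↔ c (π j) = 0 := by
    intro j
    constructor
    · intro h
      rcases mul_eq_zero.1 h with h | h
      · have : algebraMap F E (c (π j)) = algebraMap F E 0 := by simpa using h
        exact hAinj this
      · exact absurd h (hρ j)
    · intro h; simp [hadef, h]
  set S : Finset (ZMod N) := Finset.univ.filter fun j => c (π j) ≠ 0 with hSdef
  have haS : ∀ j, j ∈ S ↔ a j ≠ 0 := by
    intro j
    simp only [hSdef, Finset.mem_filter, Finset.mem_univ, true_and]
    exact (not_congr (ha0 j)).symm
  -- key equation
  have key : ∀ i < t, ∑ j : ZMod N, a j * bpow β j ^ i = 0 := by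
    intro i hi
    have h0 := hc i hi
    rw [finsum_eq_sum_of_fintype] at h0
    calc ∑ j : ZMod N, a j * bpow β j ^ i
        = ∑ l : ↥(orbitSet N q), ∑ j ∈ Finset.univ.filter (fun j => π j = l),
            a j * bpow β j ^ i :=
          (Finset.sum_fiberwise_of_maps_to (fun j _ => Finset.mem_univ _) _).symm
      _ = ∑ l : ↥(orbitSet N q),
            algebraMap F E (c l) * hEntry β ρ i (l : Set (ZMod N)) := by
          refine Finset.sum_congr rfl fun l _ => ?_
          have hfin : (l : Set (ZMod N)).Finite := Set.toFinite _
          have hH : hEntry β ρ i (l : Set (ZMod N)) =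
              ∑ j ∈ hfin.toFinset, Polynomial.aeval (bpow β j) ρ * bpow β j ^ i := by
            simp only [hEntry]
            exact finsum_mem_eq_finite_toFinset_sum _ hfin
          rw [hH, Finset.mul_sum]
          refine Finset.sum_congr ?_ fun j hj => ?_
          · ext j
            simp only [Finset.mem_filter, Finset.mem_univ, true_and, Set.Finite.mem_toFinset]
            exact hπmem l j
          · have hjl : π j = l := (hπmem l j).2 (hfin.mem_toFinset.1 hj)
            rw [hadef]
            simp only []
            rw [hjl, mul_assoc]
      _ = 0 := h0
  -- nonempty support
  obtain ⟨l0, hl0⟩ := Function.ne_iff.1 hc0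
  have hl0' : c l0 ≠ 0 := by simpa using hl0
  obtain ⟨j00, hj00⟩ := l0.2
  have hj00mem : j00 ∈ (l0 : Set (ZMod N)) := by
    rw [hj00]; exact mem_qOrbit_self N q j00
  have hπj00 : π j00 = l0 := (hπmem l0 j00).2 hj00mem
  have hj00S : j00 ∈ S := by
    rw [hSdef]
    simp only [Finset.mem_filter, Finset.mem_univ, true_and]
    rw [hπj00]; exact hl0'
  -- the Vandermonde bound
  have hS : t < S.card := by
    by_contra hcon
    push_neg at hcon
    set P : Polynomial E := ∏ j' ∈ S.erase j00, (X - C (bpow β j')) with hPdef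
    have hPdeg : P.natDegree = (S.erase j00).card := by
      rw [hPdef, Polynomial.natDegree_prod _ _ (fun j' _ => X_sub_C_ne_zero _)]
      simp [Polynomial.natDegree_X_sub_C]
    have hPlt : P.natDegree + 1 ≤ t := by
      rw [hPdeg, Finset.card_erase_of_mem hj00S]
      have : 1 ≤ S.card := Finset.card_pos.2 ⟨j00, hj00S⟩
      omega
    have hsum0 : ∑ j ∈ S, a j * P.eval (bpow β j) = 0 := by
      calc ∑ j ∈ S, a j * P.eval (bpow β j)
          = ∑ j ∈ S, ∑ i ∈ Finset.range (P.natDegree + 1),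
              P.coeff i * (a j * bpow β j ^ i) := by
            refine Finset.sum_congr rfl fun j _ => ?_
            rw [Polynomial.eval_eq_sum_range, Finset.mul_sum]
            exact Finset.sum_congr rfl fun i _ => by ring
        _ = ∑ i ∈ Finset.range (P.natDegree + 1),
              P.coeff i * ∑ j ∈ S, a j * bpow β j ^ i := by
            rw [Finset.sum_comm]
            exact Finset.sum_congr rfl fun i _ => (Finset.mul_sum _ _ _).symm
        _ = 0 := by
            refine Finset.sum_eq_zero fun i hi => ?_
            have hit : i < t := by
              have := Finset.mem_range.1 hi
              omega
            have hext : ∑ j ∈ S, a j * bpow β j ^ i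
                = ∑ j : ZMod N, a j * bpow β j ^ i := by
              refine Finset.sum_subset (Finset.subset_univ _) fun j _ hj => ?_
              have : a j = 0 := by
                by_contra h
                exact hj ((haS j).2 h)
              rw [this, zero_mul]
            rw [hext, key i hit, mul_zero]
    have hsingle : ∑ j ∈ S, a j * P.eval (bpow β j) = a j00 * P.eval (bpow β j00) := by
      refine Finset.sum_eq_single_of_mem j00 hj00S fun j hj hne => ?_
      have : P.eval (bpow β j) = 0 := by
        rw [hPdef, Polynomial.eval_prod]
        exact Finset.prod_eq_zero (Finset.mem_erase.2 ⟨hne, hj⟩) (by simp)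
      rw [this, mul_zero]
    have hPne : P.eval (bpow β j00) ≠ 0 := by
      rw [hPdef, Polynomial.eval_prod]
      refine Finset.prod_ne_zero_iff.2 fun j' hj' => ?_
      simp only [Polynomial.eval_sub, Polynomial.eval_X, Polynomial.eval_C]
      rw [sub_ne_zero]
      intro h
      exact (Finset.mem_erase.1 hj').1 (hinj h).symm
    have haj00 : a j00 ≠ 0 := (haS j00).1 hj00S
    rw [hsingle] at hsum0
    exact (mul_ne_zero haj00 hPne) hsum0
  -- counting
  set T : Finset ↥(orbitSet N q) := Finset.univ.filter fun l => c l ≠ 0 with hTdef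
  have hw : {l : ↥(orbitSet N q) | c l ≠ 0}.ncard = T.card := by
    have : {l : ↥(orbitSet N q) | c l ≠ 0} = ↑T := by
      ext l; simp [hTdef]
    rw [this, Set.ncard_coe_finset]
  have hmaps : ∀ j ∈ S, π j ∈ T := by
    intro j hj
    rw [hSdef] at hj
    simp only [Finset.mem_filter, Finset.mem_univ, true_and] at hj
    rw [hTdef]
    simp only [Finset.mem_filter, Finset.mem_univ, true_and]
    exact hj
  have hcount : S.card ≤ m * T.card := by
    rw [Finset.card_eq_sum_card_fiberwise hmaps]
    calc ∑ l ∈ T, (S.filter fun j => π j = l).card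
        ≤ ∑ _l ∈ T, m := by
          refine Finset.sum_le_sum fun l _ => ?_
          have hfin : (l : Set (ZMod N)).Finite := Set.toFinite _
          have hsub : S.filter (fun j => π j = l) ⊆ hfin.toFinset := by
            intro j hj
            rw [Finset.mem_filter] at hj
            exact hfin.mem_toFinset.2 ((hπmem l j).1 hj.2)
          refine le_trans (Finset.card_le_card hsub) ?_
          rw [← Set.ncard_eq_toFinset_card _ hfin]
          obtain ⟨j', hj'⟩ := l.2
          rw [hj']
          exact qOrbit_ncard_le h1 hm j'
      _ = T.card * m := by rw [Finset.sum_const, smul_eq_mul]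
      _ = m * T.card := mul_comm _ _
  have hnat : t + 1 ≤ m * {l : ↥(orbitSet N q) | c l ≠ 0}.ncard := by
    rw [hw]; omega
  refine ⟨hnat, ?_⟩
  have hm' : (0 : ℝ) < m := by exact_mod_cast hm
  rw [div_le_iff₀ hm']
  calc (t : ℝ) + 1 = ((t + 1 : ℕ) : ℝ) := by push_cast; ring
    _ ≤ ((m * {l : ↥(orbitSet N q) | c l ≠ 0}.ncard : ℕ) : ℝ) := Nat.cast_le.2 hnat
    _ = ({l : ↥(orbitSet N q) | c l ≠ 0}.ncard : ℝ) * m := by push_cast; ring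
end
end

section
/- Write ρ(x) = Σ_{u∈U} ρ_u x^u with ρ_u ∈ F, and for every integer k ≥ 0 let b_k = Tr_{E/F}(β^k), where Tr_{E/F} is the field trace from E to F. Then for every orbit l ∈ L, every 0 ≤ i < t, and every integer j whose residue class modulo q^m−1 lies in l, one has h_{il} = (|l|·m^{−1})·Σ_{u∈U} ρ_u · b_{j(i+u)}, where |l|·m^{−1} denotes the element of F obtained as the image of the integer |l| times the inverse of the image of m (m is invertible in F since gcd(m,q)=1). -/
open Polynomial

noncomputable section

/-! Let `d` be the minimal period of `j` under `y ↦ q y` on `ℤ/(q^m - 1)`; its orbit `l` has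
`d` elements and `d ∣ m` because `q^m = 1` there. The summand of `h_{il}` at `q^k j` is `S^{q^k}`
for `S = ρ(β^j) β^{ij}`, so `h_{il} = ∑_{k<d} S^{q^k}`. As `k ↦ S^{q^k}` has period `d`,
`Tr(S) = ∑_{k<m} S^{q^k} = (m/d) h_{il}`, and expanding `S` along the coefficients of `ρ`
turns `Tr(S)` into `∑_u ρ_u b_{j(i+u)}`. -/
namespace Function

variable {α M : Type*} [AddCommMonoid M] {f : α → α} {x y : α}

theorem Periodic.sum_range_mul {g : ℕ → M} {d : ℕ} (hg : Periodic g d) (e : ℕ) :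
    ∑ k ∈ Finset.range (d * e), g k = e • ∑ k ∈ Finset.range d, g k := by
  induction e with
  | zero => simp
  | succ e ih =>
    rw [Nat.mul_succ, Finset.sum_range_add, ih, succ_nsmul]
    congr 1
    exact Finset.sum_congr rfl fun k _ => by rw [add_comm, mul_comm, ← smul_eq_mul, hg.nsmul]

theorem range_iterate_eq_image_Iio (hx : x ∈ periodicPts f) :
    Set.range (f^[·] x) = (f^[·] x) '' Set.Iio (minimalPeriod f x) := by
  refine (Set.image_subset_range _ _).antisymm' ?_
  rintro _ ⟨n, rfl⟩
  exact ⟨n % minimalPeriod f x, Nat.mod_lt _ (minimalPeriod_pos_of_mem_periodicPts hx),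
    iterate_mod_minimalPeriod_eq⟩

theorem ncard_range_iterate (hx : x ∈ periodicPts f) :
    (Set.range (f^[·] x)).ncard = minimalPeriod f x := by
  rw [range_iterate_eq_image_Iio hx, iterate_injOn_Iio_minimalPeriod.ncard_image,
    ← Finset.coe_range, Set.ncard_coe_finset, Finset.card_range]

theorem finsum_mem_range_iterate (hx : x ∈ periodicPts f) (g : α → M) :
    ∑ᶠ y ∈ Set.range (f^[·] x), g y = ∑ k ∈ Finset.range (minimalPeriod f x), g (f^[k] x) := by
  rw [range_iterate_eq_image_Iio hx, finsum_mem_image iterate_injOn_Iio_minimalPeriod,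
    ← Finset.coe_range, finsum_mem_coe_finset]

theorem range_iterate_eq_of_mem (hx : x ∈ periodicPts f) (hy : y ∈ Set.range (f^[·] x)) :
    Set.range (f^[·] y) = Set.range (f^[·] x) := by
  obtain ⟨a, rfl⟩ := hy
  refine Set.Subset.antisymm ?_ ?_
  · rintro _ ⟨k, rfl⟩
    exact ⟨k + a, iterate_add_apply f k a x⟩
  · rintro _ ⟨k, rfl⟩
    have hd := minimalPeriod_pos_of_mem_periodicPts hx
    refine ⟨k + (minimalPeriod f x - 1) * a, ?_⟩
    dsimp only
    rw [← iterate_add_apply, add_assoc, ← add_one_mul, Nat.sub_one_add_one hd.ne',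
      iterate_add_apply, ((isPeriodicPt_minimalPeriod f x).mul_const a).eq]

theorem IsPeriodicPt.minimalPeriod_nsmul_sum_range {m : ℕ} (hx : IsPeriodicPt f m x) (hm : 0 < m)
    (g : α → M) :
    minimalPeriod f x • ∑ k ∈ Finset.range m, g (f^[k] x) =
      m • ∑ᶠ y ∈ Set.range (f^[·] x), g y := by
  obtain ⟨e, he⟩ := hx.minimalPeriod_dvd
  have hperiodic : Periodic (fun k => g (f^[k] x)) (minimalPeriod f x) := fun k => by
    dsimp only
    rw [iterate_add_apply, (isPeriodicPt_minimalPeriod f x).eq]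
  rw [finsum_mem_range_iterate (mk_mem_periodicPts hm hx), he, hperiodic.sum_range_mul,
    smul_smul, mul_comm]

end Function

theorem Algebra.trace_aeval_mul_pow {F E : Type*} [CommRing F] [CommRing E] [Algebra F E]
    (x : E) (ρ : F[X]) (i : ℕ) :
    Algebra.trace F E (aeval x ρ * x ^ i) =
      ∑ u ∈ ρ.support, ρ.coeff u * Algebra.trace F E (x ^ (i + u)) := by
  rw [aeval_def, eval₂_eq_sum, Polynomial.sum_def, Finset.sum_mul, map_sum]
  refine Finset.sum_congr rfl fun u _ => ?_
  rw [← Algebra.smul_def, smul_mul_assoc, map_smul, smul_eq_mul, ← pow_add, add_comm]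

theorem Module.finrank_eq_of_card_eq_pow {F E : Type*} [Field F] [Fintype F] [AddCommGroup E]
    [Module F E] [Fintype E] {m : ℕ} (h : Fintype.card E = Fintype.card F ^ m) :
    Module.finrank F E = m :=
  Nat.pow_right_injective Fintype.one_lt_card (Module.card_eq_pow_finrank.symm.trans h)

namespace FiniteField

variable {F : Type*} [Field F] [Fintype F]

theorem natCast_ne_zero_of_coprime_card {n : ℕ} (h : Nat.Coprime (Fintype.card F) n) :
    (n : F) ≠ 0 := by
  have hcop := h.cast (R := F)
  rw [cast_card_eq_zero, isCoprime_zero_left] at hcop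
  exact hcop.ne_zero

theorem aeval_pow_card_pow {E : Type*} [CommRing E] [Algebra F E] (x : E) (ρ : F[X]) (k : ℕ) :
    aeval (x ^ Fintype.card F ^ k) ρ = aeval x ρ ^ Fintype.card F ^ k := by
  have hfrob (y : E) : (frobeniusAlgHom F E ^ k) y = y ^ Fintype.card F ^ k := by
    rw [AlgHom.coe_pow, coe_frobeniusAlgHom, pow_iterate]
  rw [← hfrob, ← hfrob, aeval_algHom_apply]

end FiniteField

theorem ZMod.natCast_pow_eq_one {q : ℕ} (hq : 0 < q) (m : ℕ) : (q : ZMod (q ^ m - 1)) ^ m = 1 := by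
  have h := ZMod.natCast_self (q ^ m - 1)
  rwa [Nat.cast_sub (Nat.one_le_pow m q hq), Nat.cast_pow, Nat.cast_one, sub_eq_zero] at h

theorem qOrbit_eq_range_iterate (N q : ℕ) (j : ZMod N) :
    qOrbit N q j = Set.range (((q : ZMod N) * ·)^[·] j) := by
  simp only [qOrbit, mul_left_iterate]

theorem bpow_natCast {E : Type*} [Monoid E] {β : E} {N : ℕ} (hβ : orderOf β = N) (n : ℕ) :
    bpow β (n : ZMod N) = β ^ n := by
  rw [bpow, ZMod.val_natCast, ← hβ, pow_mod_orderOf]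

section Orbits

variable {q m : ℕ}

theorem isPeriodicPt_natCast_mul (hq : 0 < q) (y : ZMod (q ^ m - 1)) :
    Function.IsPeriodicPt ((q : ZMod (q ^ m - 1)) * ·) m y := by
  simp [Function.IsPeriodicPt, Function.IsFixedPt, mul_left_iterate,
    ZMod.natCast_pow_eq_one hq]

theorem qOrbit_eq_of_mem_s8 (hq : 0 < q) (hm : 0 < m) {j j₀ : ZMod (q ^ m - 1)}
    (h : j ∈ qOrbit _ q j₀) : qOrbit _ q j = qOrbit _ q j₀ := by
  simp only [qOrbit_eq_range_iterate] at h ⊢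
  exact Function.range_iterate_eq_of_mem
    (Function.mk_mem_periodicPts hm (isPeriodicPt_natCast_mul hq j₀)) h

theorem bpow_natCast_mul_iterate {E : Type*} [Monoid E] {β : E} {N : ℕ} (hβ : orderOf β = N)
    (k j : ℕ) : bpow β (((q : ZMod N) * ·)^[k] (j : ZMod N)) = (β ^ j) ^ q ^ k := by
  rw [mul_left_iterate_apply, ← Nat.cast_pow, ← Nat.cast_mul, bpow_natCast hβ, ← pow_mul,
    mul_comm]

end Orbits

theorem ncard_nsmul_algebraMap_trace_eq_nsmul_hEntry {F E : Type*} [Field F] [Fintype F]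
    [Field E] [Finite E] [Algebra F E] {m : ℕ} (hm : Module.finrank F E = m) {β : E}
    (hβ : orderOf β = Fintype.card F ^ m - 1) (ρ : F[X]) (i j : ℕ) :
    (qOrbit _ (Fintype.card F) (j : ZMod (Fintype.card F ^ m - 1))).ncard •
        algebraMap F E (Algebra.trace F E (aeval (β ^ j) ρ * (β ^ j) ^ i)) =
      m • hEntry β ρ i (qOrbit _ (Fintype.card F) (j : ZMod (Fintype.card F ^ m - 1))) := by
  have hperiodic := isPeriodicPt_natCast_mul (m := m) (Fintype.card_pos (α := F)) (j : ZMod _)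
  have hm0 : 0 < m := hm ▸ Module.finrank_pos
  rw [qOrbit_eq_range_iterate,
    Function.ncard_range_iterate (Function.mk_mem_periodicPts hm0 hperiodic),
    FiniteField.algebraMap_trace_eq_sum_pow, hm, Nat.card_eq_fintype_card, hEntry,
    ← hperiodic.minimalPeriod_nsmul_sum_range hm0]
  congr 2 with k
  rw [bpow_natCast_mul_iterate hβ, FiniteField.aeval_pow_card_pow, mul_pow, pow_right_comm]

theorem hEntry_eq_trace_formula_general (q m : ℕ) (hqm : Nat.Coprime q m)
    (F E : Type*) [Field F] [Field E] [Fintype F] [Fintype E] [Algebra F E]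
    (hF : Fintype.card F = q) (hE : Fintype.card E = q ^ m)
    (β : E) (hβ : orderOf β = q ^ m - 1) (ρ : Polynomial F) (t : ℕ) :
    ∀ l ∈ orbitSet (q ^ m - 1) q, ∀ i < t, ∀ j : ℕ, (j : ZMod (q ^ m - 1)) ∈ l →
      hEntry β ρ i l =
        algebraMap F E ((l.ncard : F) * (m : F)⁻¹ *
          ∑ u ∈ ρ.support, ρ.coeff u * Algebra.trace F E (β ^ (j * (i + u)))) := by
  subst hF
  rintro _ ⟨j₀, rfl⟩ i - j hj
  have hfinrank := Module.finrank_eq_of_card_eq_pow hE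
  rw [← qOrbit_eq_of_mem_s8 Fintype.card_pos (hfinrank ▸ Module.finrank_pos) hj]
  have key := ncard_nsmul_algebraMap_trace_eq_nsmul_hEntry hfinrank hβ ρ i j
  rw [nsmul_eq_mul, nsmul_eq_mul] at key
  have hmE : (m : E) ≠ 0 := by
    rw [← map_natCast (algebraMap F E), _root_.map_ne_zero]
    exact FiniteField.natCast_ne_zero_of_coprime_card hqm
  simp only [pow_mul, ← Algebra.trace_aeval_mul_pow]
  rw [map_mul, map_mul, map_inv₀, map_natCast, map_natCast]
  field_simp
  linear_combination -key

/-- With `b_k = Tr_{E/F}(β^k)`, for every orbit `l ∈ L`, every `0 ≤ i < t` and every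
integer `j ≥ 0` whose residue class lies in `l`, one has
`h_{il} = (|l|·m⁻¹) ∑_{u ∈ U} ρ_u b_{j(i+u)}` (an identity in `E` via the inclusion
`F ⊆ E`). -/
theorem hEntry_eq_trace_formula (q m : ℕ) (hm : 0 < m) (hqm : Nat.Coprime q m)
    (F E : Type*) [Field F] [Field E] [Fintype F] [Fintype E] [Algebra F E]
    (hF : Fintype.card F = q) (hE : Fintype.card E = q ^ m)
    (β : E) (hβ : orderOf β = q ^ m - 1) (ρ : Polynomial F) (t : ℕ) (ht : 0 < t) :
    ∀ l ∈ orbitSet (q ^ m - 1) q, ∀ i < t, ∀ j : ℕ, (j : ZMod (q ^ m - 1)) ∈ l →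
      hEntry β ρ i l =
        algebraMap F E ((l.ncard : F) * (m : F)⁻¹ *
          ∑ u ∈ ρ.support, ρ.coeff u * Algebra.trace F E (β ^ (j * (i + u)))) :=
  hEntry_eq_trace_formula_general q m hqm F E hF hE β hβ ρ t
end
end
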